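/- Let α > 1 be real, let k ≥ 1 be an integer, and let f : [0, π] → ℝ be continuously differentiable with f(0) = 0 and f(π) = 2kπ. Then π ∫₀^π (2 + f'(r)² + sin(f(r))²/sin(r)²)^α sin(r) dr ≥ (4k+2)^α · 2π. -/

import Mathlib

/-!
By AM–GM, the energy density `g = 2 + f'² + sin² f / sin² r` satisfies
`g sin r ≥ 2 sin r + 2 |f' sin f|`, and `∫ |f' sin f| = ∫ |(cos ∘ f)'|` is at least the total
variation of `cos ∘ f`, which runs `2k` times between `1` and `-1` since `f` crosses every
`jπ`, `0 ≤ j ≤ 2k`. Hence `∫ g sin ≥ 2 (4k + 2)`, and Jensen's inequality for `t ↦ t ^ α` with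
respect to `sin r dr` (of mass `2`) gives `∫ g ^ α sin ≥ 2 (4k + 2) ^ α`. The integrals make
sense because `g` is bounded: `sin ∘ f` is Lipschitz and vanishes at `0` and `π`.
-/

open Real Set MeasureTheory intervalIntegral

lemma rpow_tangent_line_le {α M x : ℝ} (hα : 1 ≤ α) (hM : 0 < M) (hx : 0 ≤ x) :
    M ^ α + α * M ^ (α - 1) * (x - M) ≤ x ^ α := by
  -- Bernoulli's inequality at `x / M = 1 + (x / M - 1)`, multiplied by `M ^ α`.
  have hb := one_add_mul_self_le_rpow_one_add
    (by linarith [div_nonneg hx hM.le] : -1 ≤ x / M - 1) hα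
  rw [add_sub_cancel, div_rpow hx hM.le, le_div_iff₀ (rpow_pos_of_pos hM α)] at hb
  calc M ^ α + α * M ^ (α - 1) * (x - M) = (1 + α * (x / M - 1)) * M ^ α := by
        rw [rpow_sub_one hM.ne']
        field_simp
    _ ≤ x ^ α := hb

lemma integral_mul_weightedAverage_rpow_le {a b α : ℝ} {g w : ℝ → ℝ} (hab : a ≤ b)
    (hα : 1 ≤ α)
    (hg : ∀ x ∈ Icc a b, 0 ≤ g x) (hw : ∀ x ∈ Icc a b, 0 ≤ w x)
    (hwi : IntervalIntegrable w volume a b)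
    (hgwi : IntervalIntegrable (fun x => g x * w x) volume a b)
    (hgαwi : IntervalIntegrable (fun x => g x ^ α * w x) volume a b)
    (hW : 0 < ∫ x in a..b, w x) :
    (∫ x in a..b, w x) * ((∫ x in a..b, g x * w x) / ∫ x in a..b, w x) ^ α ≤
      ∫ x in a..b, g x ^ α * w x := by
  set W := ∫ x in a..b, w x
  set M := (∫ x in a..b, g x * w x) / W
  have hgα : 0 ≤ ∫ x in a..b, g x ^ α * w x :=
    integral_nonneg hab fun x hx => mul_nonneg (rpow_nonneg (hg x hx) α) (hw x hx)
  have hM0 : 0 ≤ M :=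
    div_nonneg (integral_nonneg hab fun x hx => mul_nonneg (hg x hx) (hw x hx)) hW.le
  obtain hM | hM := hM0.eq_or_lt
  · rwa [← hM, zero_rpow (by linarith), mul_zero]
  have hmean : ∫ x in a..b, g x * w x = M * W := (div_mul_cancel₀ _ hW.ne').symm
  -- Integrate the tangent line of `t ↦ t ^ α` at the weighted mean `M` against `w`.
  have htangent : ∀ x, (M ^ α + α * M ^ (α - 1) * (g x - M)) * w x =
      (M ^ α - α * M ^ (α - 1) * M) * w x + α * M ^ (α - 1) * (g x * w x) := fun x => by ring
  have htangent_int : IntervalIntegrable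
      (fun x => (M ^ α + α * M ^ (α - 1) * (g x - M)) * w x) volume a b := by
    simp_rw [htangent]
    exact (hwi.const_mul _).add (hgwi.const_mul _)
  calc W * M ^ α = ∫ x in a..b, (M ^ α + α * M ^ (α - 1) * (g x - M)) * w x := by
        simp_rw [htangent]
        rw [integral_add (hwi.const_mul _) (hgwi.const_mul _), intervalIntegral.integral_const_mul,
          intervalIntegral.integral_const_mul, hmean]
        ring
    _ ≤ ∫ x in a..b, g x ^ α * w x :=
        integral_mono_on hab htangent_int hgαwi fun x hx =>
          mul_le_mul_of_nonneg_right (rpow_tangent_line_le hα hM (hg x hx)) (hw x hx)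

lemma two_mul_abs_mul_le_sq_mul_add_sq_div (a b : ℝ) {s : ℝ} (hs : 0 < s) :
    2 * |a * b| ≤ a ^ 2 * s + b ^ 2 / s := by
  rw [← sub_le_iff_le_add', le_div_iff₀ hs]
  rcases abs_cases (a * b) with ⟨h, _⟩ | ⟨h, _⟩ <;> rw [h] <;>
    nlinarith [sq_nonneg (a * s - b), sq_nonneg (a * s + b)]

section Crossings

variable {f f' : ℝ → ℝ} {a b : ℝ}

lemma abs_cos_sub_cos_le_integral_abs_deriv_mul_sin (hab : a ≤ b)
    (hf : ∀ x ∈ Icc a b, HasDerivAt f (f' x) x) (hf' : ContinuousOn f' (Icc a b)) :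
    |cos (f b) - cos (f a)| ≤ ∫ x in a..b, |f' x * sin (f x)| := by
  have hfc : ContinuousOn f (Icc a b) := fun x hx => (hf x hx).continuousAt.continuousWithinAt
  have hd : ∀ x ∈ uIcc a b, HasDerivAt (fun y => cos (f y)) (-(f' x * sin (f x))) x :=
    fun x hx => by simpa [mul_comm] using (hf x (by rwa [uIcc_of_le hab] at hx)).cos
  have hint : IntervalIntegrable (fun x => -(f' x * sin (f x))) volume a b :=
    ((hf'.mul (continuous_sin.comp_continuousOn hfc)).neg.mono (uIcc_of_le hab).subset
      ).intervalIntegrable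
  rw [← integral_eq_sub_of_hasDerivAt hd hint]
  simpa using abs_integral_le_integral_abs hab (f := fun x => -(f' x * sin (f x)))

lemma two_mul_le_integral_abs_deriv_mul_sin {m : ℤ} (n : ℕ) (hab : a ≤ b)
    (hf : ∀ x ∈ Icc a b, HasDerivAt f (f' x) x) (hf' : ContinuousOn f' (Icc a b))
    (ha : f a = m * π) (hb : (m + n) * π ≤ f b) :
    2 * n ≤ ∫ x in a..b, |f' x * sin (f x)| := by
  induction n generalizing m a with
  | zero => simpa using integral_nonneg hab fun x _ => abs_nonneg (f' x * sin (f x))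
  | succ n ih =>
    have hfc : ContinuousOn f (Icc a b) := fun x hx => (hf x hx).continuousAt.continuousWithinAt
    obtain ⟨s, hs, hfs⟩ : ∃ s ∈ Icc a b, f s = ((m + 1 : ℤ) : ℝ) * π := by
      refine intermediate_value_Icc hab hfc ⟨?_, ?_⟩ <;> push_cast at hb ⊢ <;>
        nlinarith [pi_pos]
    have hint : ∀ c ∈ Icc a b, ∀ d ∈ Icc a b,
        IntervalIntegrable (fun x => |f' x * sin (f x)|) volume c d := fun c hc d hd =>
      ((hf'.mul (continuous_sin.comp_continuousOn hfc)).abs.mono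
        (uIcc_subset_Icc hc hd)).intervalIntegrable
    -- `cos ∘ f` moves from `±1` to `∓1` between `a` and `s`.
    have hfirst : 2 ≤ ∫ x in a..s, |f' x * sin (f x)| := by
      refine le_of_eq_of_le ?_ (abs_cos_sub_cos_le_integral_abs_deriv_mul_sin hs.1
        (fun x hx => hf x ⟨hx.1, hx.2.trans hs.2⟩) (hf'.mono (Icc_subset_Icc le_rfl hs.2)))
      rw [hfs, ha, Int.cast_add, Int.cast_one, add_one_mul, cos_add_pi, ← neg_add', abs_neg,
        ← two_mul, abs_mul, abs_cos_int_mul_pi, abs_two, mul_one]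
    have hrest := ih (m := m + 1) hs.2 (fun x hx => hf x ⟨hs.1.trans hx.1, hx.2⟩)
      (hf'.mono (Icc_subset_Icc hs.1 le_rfl)) hfs (by push_cast at hb ⊢; linarith)
    rw [← integral_add_adjacent_intervals (hint a ⟨le_rfl, hab⟩ s hs)
      (hint s hs b ⟨hab, le_rfl⟩)]
    push_cast
    linarith

end Crossings

lemma abs_le_mul_sin_of_abs_sub_le {h : ℝ → ℝ} {C r : ℝ}
    (hh : ∀ x ∈ Icc 0 π, ∀ y ∈ Icc 0 π, |h y - h x| ≤ C * |y - x|)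
    (h0 : h 0 = 0) (hπ : h π = 0) (hr : r ∈ Icc 0 π) :
    |h r| ≤ π / 2 * C * sin r := by
  have hC : 0 ≤ C := by
    have := hh 0 ⟨le_rfl, pi_pos.le⟩ π ⟨pi_pos.le, le_rfl⟩
    rw [h0, hπ, sub_zero, abs_zero, sub_zero, abs_of_pos pi_pos] at this
    exact nonneg_of_mul_nonneg_left this pi_pos
  have hsin : ∀ x, 0 ≤ x → x ≤ π / 2 → C * x ≤ π / 2 * C * sin x := fun x hx hx' => by
    have := mul_le_sin hx hx'
    rw [div_mul_eq_mul_div, div_le_iff₀ pi_pos] at this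
    nlinarith
  rcases le_total r (π / 2) with hr2 | hr2
  · calc |h r| = |h r - h 0| := by rw [h0, sub_zero]
      _ ≤ C * |r - 0| := hh 0 ⟨le_rfl, pi_pos.le⟩ r hr
      _ = C * r := by rw [sub_zero, abs_of_nonneg hr.1]
      _ ≤ π / 2 * C * sin r := hsin r hr.1 hr2
  · calc |h r| = |h r - h π| := by rw [hπ, sub_zero]
      _ ≤ C * |r - π| := hh π ⟨pi_pos.le, le_rfl⟩ r hr
      _ = C * (π - r) := by rw [abs_sub_comm, abs_of_nonneg (by linarith [hr.2])]
      _ ≤ π / 2 * C * sin (π - r) := hsin (π - r) (by linarith [hr.2]) (by linarith)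
      _ = π / 2 * C * sin r := by rw [sin_pi_sub]

lemma intervalIntegrable_of_continuousOn_Ioo_of_abs_le {φ : ℝ → ℝ} {a b M : ℝ}
    (hab : a ≤ b) (hφ : ContinuousOn φ (Ioo a b)) (hM : ∀ x ∈ Ioo a b, |φ x| ≤ M) :
    IntervalIntegrable φ volume a b := by
  rw [intervalIntegrable_iff_integrableOn_Ioo_of_le hab]
  exact (integrableOn_const measure_Ioo_lt_top.ne).mono'
    (hφ.aestronglyMeasurable measurableSet_Ioo)
    ((ae_restrict_iff' measurableSet_Ioo).mpr (.of_forall hM))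

noncomputable def energyDensity (f f' : ℝ → ℝ) (r : ℝ) : ℝ :=
  2 + f' r ^ 2 + sin (f r) ^ 2 / sin r ^ 2

section EnergyDensity

variable {f f' : ℝ → ℝ} {r : ℝ}

lemma two_le_energyDensity : 2 ≤ energyDensity f f' r := by
  unfold energyDensity
  have := div_nonneg (sq_nonneg (sin (f r))) (sq_nonneg (sin r))
  nlinarith [sq_nonneg (f' r)]

lemma two_mul_sin_add_two_mul_abs_le_energyDensity_mul_sin (hr : 0 < sin r) :
    2 * sin r + 2 * |f' r * sin (f r)| ≤ energyDensity f f' r * sin r := by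
  have hsplit : energyDensity f f' r * sin r =
      2 * sin r + (f' r ^ 2 * sin r + sin (f r) ^ 2 / sin r) := by
    unfold energyDensity
    field_simp
    ring
  rw [hsplit]
  gcongr
  exact two_mul_abs_mul_le_sq_mul_add_sq_div _ _ hr

lemma energyDensity_le {C D : ℝ} (hr : 0 < sin r) (hf' : |f' r| ≤ C)
    (hf : |sin (f r)| ≤ D * sin r) :
    energyDensity f f' r ≤ 2 + C ^ 2 + D ^ 2 := by
  have h1 : f' r ^ 2 ≤ C ^ 2 := sq_le_sq' (abs_le.mp hf').1 (abs_le.mp hf').2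
  have h2 : sin (f r) ^ 2 / sin r ^ 2 ≤ D ^ 2 := by
    rw [div_le_iff₀ (by positivity), ← mul_pow, ← sq_abs (sin (f r))]
    exact pow_le_pow_left₀ (abs_nonneg _) hf 2
  unfold energyDensity
  linarith

lemma continuousOn_energyDensity (hf : ContinuousOn f (Ioo 0 π))
    (hf' : ContinuousOn f' (Ioo 0 π)) : ContinuousOn (energyDensity f f') (Ioo 0 π) :=
  ((continuousOn_const.add (hf'.pow 2)).add
    (((continuous_sin.comp_continuousOn hf).pow 2).div (continuous_sin.continuousOn.pow 2)
      fun _ hr => pow_ne_zero _ (sin_pos_of_pos_of_lt_pi hr.1 hr.2).ne'))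

lemma abs_sin_comp_le_mul_sin (hf : ∀ r ∈ Icc 0 π, HasDerivAt f (f' r) r) {C : ℝ}
    (hC : ∀ r ∈ Icc 0 π, ‖f' r‖ ≤ C)
    (h0 : sin (f 0) = 0) (hπ : sin (f π) = 0) (hr : r ∈ Icc 0 π) :
    |sin (f r)| ≤ π / 2 * C * sin r := by
  refine abs_le_mul_sin_of_abs_sub_le (h := fun r => sin (f r)) (fun x hx y hy => ?_) h0 hπ hr
  refine (abs_sin_sub_sin_le _ _).trans ?_
  simpa using (convex_Icc 0 π).norm_image_sub_le_of_norm_hasDerivWithin_le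
    (fun z hz => (hf z hz).hasDerivWithinAt) hC hx hy

lemma intervalIntegrable_energyDensity_rpow_mul_sin
    (hf : ∀ r ∈ Icc 0 π, HasDerivAt f (f' r) r) (hf' : ContinuousOn f' (Icc 0 π))
    {p : ℝ} (hp : 0 ≤ p) (h0 : sin (f 0) = 0) (hπ : sin (f π) = 0) :
    IntervalIntegrable (fun r => energyDensity f f' r ^ p * sin r) volume 0 π := by
  obtain ⟨C, hC⟩ := isCompact_Icc.exists_bound_of_continuousOn hf'
  have hfc : ContinuousOn f (Icc 0 π) := fun r hr => (hf r hr).continuousAt.continuousWithinAt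
  have hnonneg : ∀ r, 0 ≤ energyDensity f f' r := fun _ => zero_le_two.trans two_le_energyDensity
  have hle : ∀ r ∈ Ioo 0 π, energyDensity f f' r ≤ 2 + C ^ 2 + (π / 2 * C) ^ 2 :=
    fun r hr =>
    energyDensity_le (sin_pos_of_pos_of_lt_pi hr.1 hr.2) (hC r (Ioo_subset_Icc_self hr))
      (abs_sin_comp_le_mul_sin hf hC h0 hπ (Ioo_subset_Icc_self hr))
  refine intervalIntegrable_of_continuousOn_Ioo_of_abs_le
    (M := (2 + C ^ 2 + (π / 2 * C) ^ 2) ^ p) pi_pos.le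
    (((continuousOn_energyDensity (hfc.mono Ioo_subset_Icc_self)
      (hf'.mono Ioo_subset_Icc_self)).rpow_const fun _ _ => Or.inr hp).mul
      continuous_sin.continuousOn) fun r hr => ?_
  rw [abs_mul, abs_of_nonneg (rpow_nonneg (hnonneg r) p)]
  exact (mul_le_of_le_one_right (rpow_nonneg (hnonneg r) p) (abs_sin_le_one r)).trans
    (rpow_le_rpow (hnonneg r) (hle r hr) hp)

lemma four_add_two_mul_integral_abs_le_integral_energyDensity_mul_sin
    (hf : ∀ r ∈ Icc 0 π, HasDerivAt f (f' r) r) (hf' : ContinuousOn f' (Icc 0 π))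
    (hint : IntervalIntegrable (fun r => energyDensity f f' r * sin r) volume 0 π) :
    4 + 2 * ∫ r in (0 : ℝ)..π, |f' r * sin (f r)| ≤
      ∫ r in (0 : ℝ)..π, energyDensity f f' r * sin r := by
  have hfc : ContinuousOn f (Icc 0 π) := fun r hr => (hf r hr).continuousAt.continuousWithinAt
  have hsin_int := continuous_sin.intervalIntegrable (μ := volume) 0 π
  have habs_int : IntervalIntegrable (fun r => |f' r * sin (f r)|) volume 0 π :=
    (hf'.mul (continuous_sin.comp_continuousOn hfc)).abs.intervalIntegrable_of_Icc pi_pos.le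
  calc 4 + 2 * ∫ r in (0 : ℝ)..π, |f' r * sin (f r)|
      = ∫ r in (0 : ℝ)..π, (2 * sin r + 2 * |f' r * sin (f r)|) := by
        rw [integral_add (hsin_int.const_mul 2) (habs_int.const_mul 2),
          intervalIntegral.integral_const_mul, intervalIntegral.integral_const_mul, integral_sin,
          cos_zero, cos_pi]
        norm_num
    _ ≤ ∫ r in (0 : ℝ)..π, energyDensity f f' r * sin r :=
        integral_mono_on_of_le_Ioo pi_pos.le ((hsin_int.const_mul 2).add (habs_int.const_mul 2))
          hint fun r hr =>
          two_mul_sin_add_two_mul_abs_le_energyDensity_mul_sin (sin_pos_of_pos_of_lt_pi hr.1 hr.2)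

end EnergyDensity

theorem alpha_energy_lower_bound_even_general (α : ℝ) (hα : 1 < α) (k : ℕ)
    (f f' : ℝ → ℝ)
    (hderiv : ∀ r ∈ Set.Icc (0 : ℝ) π, HasDerivAt f (f' r) r)
    (hcont : ContinuousOn f' (Set.Icc (0 : ℝ) π))
    (h0 : f 0 = 0) (hπ : f π = 2 * k * π) :
    (4 * (k : ℝ) + 2) ^ α * (2 * π) ≤
      π * ∫ r in (0 : ℝ)..π,
        (2 + f' r ^ 2 + sin (f r) ^ 2 / sin r ^ 2) ^ α * sin r := by
  change _ ≤ π * ∫ r in (0 : ℝ)..π, energyDensity f f' r ^ α * sin r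
  have hint : ∀ p : ℝ, 0 ≤ p →
      IntervalIntegrable (fun r => energyDensity f f' r ^ p * sin r) volume 0 π := fun p hp =>
    intervalIntegrable_energyDensity_rpow_mul_sin hderiv hcont hp (by simp [h0])
      (by rw [hπ]; exact_mod_cast sin_nat_mul_pi (2 * k))
  have hint_one : IntervalIntegrable (fun r => energyDensity f f' r * sin r) volume 0 π := by
    simpa using hint 1 zero_le_one
  have hcross := two_mul_le_integral_abs_deriv_mul_sin (m := 0) (2 * k) pi_pos.le hderiv hcont
    (by simp [h0]) (by push_cast; linarith)
  have hmean :=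
    four_add_two_mul_integral_abs_le_integral_energyDensity_mul_sin hderiv hcont hint_one
  have hjensen := integral_mul_weightedAverage_rpow_le pi_pos.le hα.le
    (fun r _ => zero_le_two.trans two_le_energyDensity)
    (fun r hr => sin_nonneg_of_nonneg_of_le_pi hr.1 hr.2) (continuous_sin.intervalIntegrable 0 π)
    hint_one (hint α (by linarith)) (by rw [integral_sin]; norm_num)
  rw [integral_sin, cos_zero, cos_pi, sub_neg_eq_add, one_add_one_eq_two] at hjensen
  push_cast at hcross
  calc (4 * (k : ℝ) + 2) ^ α * (2 * π) = π * (2 * (4 * (k : ℝ) + 2) ^ α) := by ring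
    _ ≤ π * (2 * ((∫ r in (0 : ℝ)..π, energyDensity f f' r * sin r) / 2) ^ α) := by
        gcongr
        linarith
    _ ≤ π * ∫ r in (0 : ℝ)..π, energyDensity f f' r ^ α * sin r := by gcongr

/-- Energy lower bound `I_α(f) ≥ (4k+2)^α · 2π` for C¹ profiles `f : [0,π] → ℝ` with
`f 0 = 0` and `f π = 2kπ`, `k ≥ 1` (degree-zero co-rotationally symmetric maps). -/
theorem alpha_energy_lower_bound_even (α : ℝ) (hα : 1 < α) (k : ℕ) (hk : 1 ≤ k)
    (f f' : ℝ → ℝ)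
    (hderiv : ∀ r ∈ Set.Icc (0 : ℝ) π, HasDerivAt f (f' r) r)
    (hcont : ContinuousOn f' (Set.Icc (0 : ℝ) π))
    (h0 : f 0 = 0) (hπ : f π = 2 * k * π) :
    (4 * (k : ℝ) + 2) ^ α * (2 * π) ≤
      π * ∫ r in (0 : ℝ)..π,
        (2 + f' r ^ 2 + sin (f r) ^ 2 / sin r ^ 2) ^ α * sin r :=
  alpha_energy_lower_bound_even_general α hα k f f' hderiv hcont h0 hπ
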